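/- Let D ⊂ ℝ² be a bounded Lipschitz domain invariant under rotation by 2π/N for some N ≥ 3, and let T be an invertible 2×2 real matrix. Then for each n ≥ 1, the sum of the first n Neumann eigenvalues satisfies ∑_{j=1}^n μ_j(T(D)) ≤ (1/2)‖T^{-1}‖²_HS ∑_{j=1}^n μ_j(D). -/

import Mathlib

open MeasureTheory Real Set

noncomputable section

/-- Squared Euclidean norm of the gradient of `u` at `x`. -/
def grad2 (u : (Fin 2 → ℝ) → ℝ) (x : Fin 2 → ℝ) : ℝ :=
  ∑ i : Fin 2, (fderiv ℝ u x (Pi.single i 1)) ^ 2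

/-- The sum `μ₁ + ⋯ + μ_n` of the first `n` Neumann eigenvalues of the Laplacian on `Ω`,
via the Rayleigh–Poincaré variational principle over smooth trial functions (which are
dense in `H¹(Ω)` for a Lipschitz domain). -/
def neumannSum (Ω : Set (Fin 2 → ℝ)) (n : ℕ) : ℝ :=
  sInf { S : ℝ | ∃ v : Fin n → (Fin 2 → ℝ) → ℝ,
    (∀ j, ContDiff ℝ (⊤ : ℕ∞) (v j)) ∧
    (∀ j, (∫ x in Ω, (v j x) ^ 2) ≠ 0) ∧
    (∀ j k, j ≠ k → (∫ x in Ω, v j x * v k x) = 0) ∧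
    S = ∑ j, (∫ x in Ω, grad2 (v j) x) / (∫ x in Ω, (v j x) ^ 2) }

/-- `D` has Lipschitz boundary: near each boundary point, after a rotation, `D` coincides
with the region below the graph of a Lipschitz function. -/
def HasLipschitzBoundary (D : Set (Fin 2 → ℝ)) : Prop :=
  ∀ p ∈ frontier D, ∃ R : Matrix (Fin 2) (Fin 2) ℝ, R * R.transpose = 1 ∧
    ∃ f : ℝ → ℝ, ∃ K : NNReal, LipschitzWith K f ∧ ∃ r : ℝ, 0 < r ∧
      ∀ x ∈ Metric.ball p r,
        (x ∈ D ↔ R.mulVec (x - p) 1 < f (R.mulVec (x - p) 0))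

/-- The 2×2 rotation matrix by angle `θ`. -/
def rot (θ : ℝ) : Matrix (Fin 2) (Fin 2) ℝ :=
  !![Real.cos θ, -Real.sin θ; Real.sin θ, Real.cos θ]

/-! ### Auxiliary material -/

open Pointwise

abbrev E2 := Fin 2 → ℝ

/-- The set of trial values in the Rayleigh–Poincaré principle. -/
def trialSet (Ω : Set (Fin 2 → ℝ)) (n : ℕ) : Set ℝ :=
  { S : ℝ | ∃ v : Fin n → (Fin 2 → ℝ) → ℝ,
    (∀ j, ContDiff ℝ (⊤ : ℕ∞) (v j)) ∧
    (∀ j, (∫ x in Ω, (v j x) ^ 2) ≠ 0) ∧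
    (∀ j k, j ≠ k → (∫ x in Ω, v j x * v k x) = 0) ∧
    S = ∑ j, (∫ x in Ω, grad2 (v j) x) / (∫ x in Ω, (v j x) ^ 2) }

lemma neumannSum_eq (Ω : Set (Fin 2 → ℝ)) (n : ℕ) :
    neumannSum Ω n = sInf (trialSet Ω n) := rfl

lemma trialSet_nonneg (Ω : Set (Fin 2 → ℝ)) (hΩ : MeasurableSet Ω) (n : ℕ) :
    ∀ S ∈ trialSet Ω n, 0 ≤ S := by
  rintro S ⟨v, hv, hL2, horth, rfl⟩
  apply Finset.sum_nonneg
  intro j _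
  apply div_nonneg
  · exact setIntegral_nonneg hΩ fun x _ => Finset.sum_nonneg fun i _ => sq_nonneg _
  · exact setIntegral_nonneg hΩ fun x _ => sq_nonneg _

/-! #### Rotation matrices -/

lemma rot_mul (a b : ℝ) : rot a * rot b = rot (a+b) := by
  simp only [rot, Matrix.mul_fin_two, Real.cos_add, Real.sin_add]
  congr 1 <;> ring_nf

lemma rot_zero : rot 0 = 1 := by
  simp [rot]; exact (Matrix.one_fin_two).symm

lemma det_rot (θ : ℝ) : (rot θ).det = 1 := by
  simp [rot, Matrix.det_fin_two]; ring_nf; rw [add_comm]; exact Real.sin_sq_add_cos_sq θ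

lemma rot_inv (θ : ℝ) : (rot θ)⁻¹ = rot (-θ) := by
  apply Matrix.inv_eq_right_inv
  rw [rot_mul, add_neg_cancel, rot_zero]

lemma image_mulVec_mul (A B : Matrix (Fin 2) (Fin 2) ℝ) (S : Set E2) :
    (fun x => (A*B).mulVec x) '' S = (fun x => A.mulVec x) '' ((fun x => B.mulVec x) '' S) := by
  rw [← Set.image_comp]
  apply Set.image_congr
  intro x _
  simp only [Function.comp_apply, Matrix.mulVec_mulVec]

lemma rot_image (D : Set E2) (θ : ℝ) (hθ : (fun x => (rot θ).mulVec x) '' D = D) :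
    ∀ k : ℕ, (fun x => (rot (k * θ)).mulVec x) '' D = D := by
  intro k
  induction k with
  | zero => simp [rot_zero, Matrix.one_mulVec]
  | succ m ih =>
    have h : ((m : ℝ) + 1) * θ = θ + m * θ := by ring
    push_cast
    rw [h, ← rot_mul, image_mulVec_mul, ih, hθ]

lemma rot_image_neg (D : Set E2) (φ : ℝ) (hφ : (fun x => (rot φ).mulVec x) '' D = D) :
    (fun x => (rot (-φ)).mulVec x) '' D = D := by
  conv_lhs => rw [← hφ]
  rw [← image_mulVec_mul, rot_mul, neg_add_cancel, rot_zero]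
  simp [Matrix.one_mulVec]

/-! #### Trigonometric sums -/

lemma sum_exp_zero (N : ℕ) (hN : 3 ≤ N) :
    ∑ k ∈ Finset.range N, Complex.exp ((4 * Real.pi * k / N : ℝ) * Complex.I) = 0 := by
  have hN0 : (N : ℂ) ≠ 0 := Nat.cast_ne_zero.mpr (by omega)
  set z : ℂ := Complex.exp ((4 * Real.pi / N : ℝ) * Complex.I) with hz
  have hpow : ∀ k : ℕ, Complex.exp ((4 * Real.pi * k / N : ℝ) * Complex.I) = z ^ k := by
    intro k
    rw [hz, ← Complex.exp_nat_mul]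
    congr 1
    push_cast
    ring
  have hz1 : z ≠ 1 := by
    rw [hz, Ne, Complex.exp_eq_one_iff]
    rintro ⟨m, hm⟩
    have hm' : ((4 * Real.pi / N : ℝ) : ℂ) * Complex.I
        = ((m : ℝ) * (2 * Real.pi) : ℝ) * Complex.I := by
      rw [hm]; push_cast; ring
    have hre : (4 * Real.pi / N : ℝ) = (m : ℝ) * (2 * Real.pi) := by
      have := mul_right_cancel₀ Complex.I_ne_zero hm'
      exact_mod_cast this
    have hNr : (N : ℝ) ≠ 0 := Nat.cast_ne_zero.mpr (by omega)
    rw [div_eq_iff hNr] at hre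
    have h2 : (2 * Real.pi) * 2 = (2 * Real.pi) * ((m : ℝ) * N) := by linear_combination hre
    have h2' : (2 : ℝ) = (m : ℝ) * N :=
      mul_left_cancel₀ (by positivity) h2
    have hZ : m * (N : ℤ) = 2 := by exact_mod_cast h2'.symm
    have hN3 : (3 : ℤ) ≤ N := by exact_mod_cast hN
    rcases le_or_gt m 0 with h | h
    · nlinarith
    · nlinarith
  have hzN : z ^ N = 1 := by
    rw [hz, ← Complex.exp_nat_mul]
    have heq : (N : ℂ) * ((4 * Real.pi / N : ℝ) * Complex.I)
        = (2:ℕ) * (2 * Real.pi * Complex.I) := by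
      push_cast
      field_simp
      ring
    rw [heq, Complex.exp_nat_mul, Complex.exp_two_pi_mul_I, one_pow]
  calc ∑ k ∈ Finset.range N, Complex.exp ((4 * Real.pi * k / N : ℝ) * Complex.I)
      = ∑ k ∈ Finset.range N, z ^ k := Finset.sum_congr rfl fun k _ => hpow k
    _ = (z ^ N - 1) / (z - 1) := geom_sum_eq hz1 N
    _ = 0 := by rw [hzN]; simp

lemma sum_cos2 (N : ℕ) (hN : 3 ≤ N) :
    ∑ k ∈ Finset.range N, Real.cos (2 * (2 * Real.pi * k / N)) = 0 := by
  have h := sum_exp_zero N hN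
  have h2 := congrArg Complex.re h
  rw [Complex.re_sum, Complex.zero_re] at h2
  rw [← h2]
  apply Finset.sum_congr rfl
  intro k _
  rw [Complex.exp_ofReal_mul_I_re]
  congr 1
  ring

lemma sum_sin2 (N : ℕ) (hN : 3 ≤ N) :
    ∑ k ∈ Finset.range N, Real.sin (2 * (2 * Real.pi * k / N)) = 0 := by
  have h := sum_exp_zero N hN
  have h2 := congrArg Complex.im h
  rw [Complex.im_sum, Complex.zero_im] at h2
  rw [← h2]
  apply Finset.sum_congr rfl
  intro k _
  rw [Complex.exp_ofReal_mul_I_im]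
  congr 1
  ring

lemma sum_cos_sq (N : ℕ) (hN : 3 ≤ N) :
    ∑ k ∈ Finset.range N, Real.cos (2 * Real.pi * k / N) ^ 2 = N / 2 := by
  have h := sum_cos2 N hN
  have h1 : ∀ k : ℕ, Real.cos (2 * Real.pi * k / N) ^ 2
      = 1/2 + Real.cos (2 * (2*Real.pi*k/N)) / 2 := fun k => Real.cos_sq _
  rw [Finset.sum_congr rfl fun k _ => h1 k, Finset.sum_add_distrib, Finset.sum_const,
    ← Finset.sum_div, h]
  simp
  ring

lemma sum_sin_sq (N : ℕ) (hN : 3 ≤ N) :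
    ∑ k ∈ Finset.range N, Real.sin (2 * Real.pi * k / N) ^ 2 = N / 2 := by
  have h := sum_cos_sq N hN
  have h1 : ∀ k : ℕ, Real.sin (2 * Real.pi * k / N) ^ 2
      = 1 - Real.cos (2 * Real.pi * k / N) ^ 2 := fun k => Real.sin_sq _
  rw [Finset.sum_congr rfl fun k _ => h1 k, Finset.sum_sub_distrib, Finset.sum_const, h]
  simp
  ring

lemma sum_cos_sin (N : ℕ) (hN : 3 ≤ N) :
    ∑ k ∈ Finset.range N,
      Real.cos (2 * Real.pi * k / N) * Real.sin (2 * Real.pi * k / N) = 0 := by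
  have h := sum_sin2 N hN
  have h1 : ∀ k : ℕ, Real.cos (2 * Real.pi * k / N) * Real.sin (2 * Real.pi * k / N)
      = Real.sin (2 * (2*Real.pi*k/N)) / 2 := by
    intro k
    rw [Real.sin_two_mul]
    ring
  rw [Finset.sum_congr rfl fun k _ => h1 k, ← Finset.sum_div, h]
  simp

/-! #### The key pointwise algebraic identity -/

lemma hF (B : Matrix (Fin 2) (Fin 2) ℝ) (g : Fin 2 → ℝ) (θ : ℝ) :
    ∑ i : Fin 2, (∑ a : Fin 2, g a * ((rot θ) * B) a i) ^ 2
      = Real.cos θ ^ 2 * (g 0 ^2 * (B 0 0 ^2 + B 0 1 ^2) + g 1 ^2 * (B 1 0 ^2 + B 1 1 ^2)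
          + 2 * g 0 * g 1 * (B 0 0 * B 1 0 + B 0 1 * B 1 1))
      + Real.sin θ ^ 2 * (g 1 ^2 * (B 0 0 ^2 + B 0 1 ^2) + g 0 ^2 * (B 1 0 ^2 + B 1 1 ^2)
          - 2 * g 0 * g 1 * (B 0 0 * B 1 0 + B 0 1 * B 1 1))
      + (Real.cos θ * Real.sin θ) * (2 * g 0 * g 1 * (B 0 0 ^2 + B 0 1 ^2)
          - 2 * g 0 * g 1 * (B 1 0 ^2 + B 1 1 ^2)
          + 2 * (g 1 ^2 - g 0 ^2) * (B 0 0 * B 1 0 + B 0 1 * B 1 1)) := by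
  simp only [rot, Matrix.mul_apply, Fin.sum_univ_two, Matrix.cons_val', Matrix.cons_val_zero,
    Matrix.cons_val_one, Matrix.head_cons, Matrix.head_fin_const, Matrix.of_apply,
    Matrix.empty_val', Matrix.cons_val_fin_one]
  ring

lemma key_sum (N : ℕ) (hN : 3 ≤ N) (B : Matrix (Fin 2) (Fin 2) ℝ) (g : Fin 2 → ℝ) :
    ∑ k ∈ Finset.range N, ∑ i : Fin 2,
        (∑ a : Fin 2, g a * ((rot (2 * Real.pi * k / N)) * B) a i) ^ 2
      = (N / 2) * ((∑ i : Fin 2, ∑ j : Fin 2, (B i j) ^ 2) * (∑ a : Fin 2, (g a) ^ 2)) := by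
  set α := g 0 ^2 * (B 0 0 ^2 + B 0 1 ^2) + g 1 ^2 * (B 1 0 ^2 + B 1 1 ^2)
      + 2 * g 0 * g 1 * (B 0 0 * B 1 0 + B 0 1 * B 1 1) with hα
  set β := g 1 ^2 * (B 0 0 ^2 + B 0 1 ^2) + g 0 ^2 * (B 1 0 ^2 + B 1 1 ^2)
      - 2 * g 0 * g 1 * (B 0 0 * B 1 0 + B 0 1 * B 1 1) with hβ
  set γ := 2 * g 0 * g 1 * (B 0 0 ^2 + B 0 1 ^2) - 2 * g 0 * g 1 * (B 1 0 ^2 + B 1 1 ^2)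
      + 2 * (g 1 ^2 - g 0 ^2) * (B 0 0 * B 1 0 + B 0 1 * B 1 1) with hγ
  have step : ∀ k ∈ Finset.range N, ∑ i : Fin 2,
      (∑ a : Fin 2, g a * ((rot (2 * Real.pi * k / N)) * B) a i) ^ 2
      = Real.cos (2 * Real.pi * k / N) ^ 2 * α + Real.sin (2 * Real.pi * k / N) ^ 2 * β
        + (Real.cos (2 * Real.pi * k / N) * Real.sin (2 * Real.pi * k / N)) * γ :=
    fun k _ => hF B g _
  rw [Finset.sum_congr rfl step]
  rw [Finset.sum_add_distrib, Finset.sum_add_distrib, ← Finset.sum_mul, ← Finset.sum_mul,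
    ← Finset.sum_mul, sum_cos_sq N hN, sum_sin_sq N hN, sum_cos_sin N hN]
  simp only [Fin.sum_univ_two]
  rw [hα, hβ, hγ]
  ring

/-! #### Change of variables, integrability, chain rule -/

lemma cov (A : Matrix (Fin 2) (Fin 2) ℝ) (hA : IsUnit A.det) (D : Set E2)
    (hD : MeasurableSet D) (g : E2 → ℝ) :
    ∫ x in (fun x => A.mulVec x) '' D, g x = |A.det| * ∫ x in D, g (A.mulVec x) := by
  have hderiv : ∀ x ∈ D, HasFDerivWithinAt (fun x => A.mulVec x)
      ((Matrix.mulVecLin A).toContinuousLinearMap) D x := by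
    intro x _
    exact ((Matrix.mulVecLin A).toContinuousLinearMap.hasFDerivAt).hasFDerivWithinAt
  have hinj : Set.InjOn (fun x => A.mulVec x) D := by
    intro x _ y _ hxy
    simp only at hxy
    have h2 : A⁻¹.mulVec (A.mulVec x) = A⁻¹.mulVec (A.mulVec y) := by rw [hxy]
    rwa [Matrix.mulVec_mulVec, Matrix.mulVec_mulVec, Matrix.nonsing_inv_mul _ hA,
      Matrix.one_mulVec, Matrix.one_mulVec] at h2
  rw [integral_image_eq_integral_abs_det_fderiv_smul volume hD hderiv hinj g]
  have hdet : ((Matrix.mulVecLin A).toContinuousLinearMap : E2 →L[ℝ] E2).det = A.det := by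
    rw [ContinuousLinearMap.det]
    rw [show ((Matrix.mulVecLin A).toContinuousLinearMap : E2 →L[ℝ] E2).toLinearMap
        = Matrix.toLin' A by rw [Matrix.toLin'_apply']; rfl]
    exact LinearMap.det_toLin' A
  simp only [hdet, smul_eq_mul]
  rw [← integral_const_mul]

lemma integrableOn_of_cont (D : Set E2) (hbdd : Bornology.IsBounded D)
    (f : E2 → ℝ) (hf : Continuous f) : IntegrableOn f D := by
  have hcomp : IsCompact (closure D) := Metric.isCompact_of_isClosed_isBounded
    isClosed_closure hbdd.closure
  exact (hf.continuousOn.integrableOn_compact hcomp).mono_set subset_closure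

lemma grad2_comp (A : Matrix (Fin 2) (Fin 2) ℝ) (v : E2 → ℝ) (hv : ContDiff ℝ (⊤ : ℕ∞) v) (x : E2) :
    grad2 (fun y => v (A.mulVec y)) x
      = ∑ i : Fin 2, (∑ a : Fin 2, fderiv ℝ v (A.mulVec x) (Pi.single a 1) * A a i) ^ 2 := by
  have hA : HasFDerivAt (fun y : E2 => A.mulVec y)
      ((Matrix.mulVecLin A).toContinuousLinearMap) x :=
    (Matrix.mulVecLin A).toContinuousLinearMap.hasFDerivAt
  have hv' : DifferentiableAt ℝ v (A.mulVec x) := (hv.differentiable (by simp)) _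
  have hcomp : fderiv ℝ (fun y => v (A.mulVec y)) x
      = (fderiv ℝ v (A.mulVec x)).comp ((Matrix.mulVecLin A).toContinuousLinearMap) :=
    (hv'.hasFDerivAt.comp x hA).fderiv
  unfold grad2
  rw [hcomp]
  apply Finset.sum_congr rfl
  intro i _
  congr 1
  have h1 : ((fderiv ℝ v (A.mulVec x)).comp ((Matrix.mulVecLin A).toContinuousLinearMap))
      (Pi.single i 1) = fderiv ℝ v (A.mulVec x) (A.mulVec (Pi.single i 1)) := rfl
  rw [h1, Matrix.mulVec_single]
  have h2 : (MulOpposite.op (1:ℝ) • A.col i)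
      = (∑ a : Fin 2, (A a i) • (Pi.single a (1:ℝ) : E2) : E2) := by
    ext b
    simp only [Finset.sum_apply, Pi.smul_apply, Fin.sum_univ_two, Pi.single_apply,
      smul_eq_mul, mul_one]
    fin_cases b <;> simp
  rw [h2]
  rw [map_sum]
  apply Finset.sum_congr rfl
  intro a _
  rw [(fderiv ℝ v (A.mulVec x)).map_smul]
  simp [smul_eq_mul, mul_comm]

/-! ### Main theorem -/

/-- For a bounded Lipschitz domain `D ⊂ ℝ²` invariant under rotation by `2π/N` with
`N ≥ 3`, and any invertible 2×2 matrix `T`: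
`∑_{j=1}^n μ_j(T(D)) ≤ (1/2)‖T⁻¹‖²_HS ∑_{j=1}^n μ_j(D)` for each `n ≥ 1`. -/
theorem neumann_sum_linear_image (N : ℕ) (hN : 3 ≤ N) (D : Set (Fin 2 → ℝ))
    (hopen : IsOpen D) (hconn : IsConnected D) (hbdd : Bornology.IsBounded D)
    (hLip : HasLipschitzBoundary D)
    (hsym : (fun x => (rot (2 * Real.pi / (N : ℝ))).mulVec x) '' D = D)
    (T : Matrix (Fin 2) (Fin 2) ℝ) (hT : IsUnit T.det) (n : ℕ) (hn : 1 ≤ n) :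
    neumannSum ((fun x => T.mulVec x) '' D) n
      ≤ (1 / 2) * (∑ i : Fin 2, ∑ j : Fin 2, (T⁻¹ i j) ^ 2) * neumannSum D n := by
  classical
  set TD := (fun x => T.mulVec x) '' D with hTDdef
  have hmD : MeasurableSet D := hopen.measurableSet
  have hdetT : T.det ≠ 0 := by
    intro h; rw [h] at hT; exact (by simp at hT : ¬ IsUnit (0:ℝ)) hT
  have habs : |T.det| ≠ 0 := abs_ne_zero.mpr hdetT
  have hmTD : MeasurableSet TD := by
    have hTD2 : TD = (fun x => (T⁻¹).mulVec x) ⁻¹' D := by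
      ext x
      constructor
      · rintro ⟨y, hy, rfl⟩
        simpa only [Set.mem_preimage, Matrix.mulVec_mulVec, Matrix.nonsing_inv_mul T hT, Matrix.one_mulVec] using hy
      · intro hx
        exact ⟨T⁻¹.mulVec x, hx, by
          simp only [Matrix.mulVec_mulVec, Matrix.mul_nonsing_inv T hT, Matrix.one_mulVec]⟩
    rw [hTD2]
    have hc : Continuous fun x : E2 => (T⁻¹).mulVec x :=
      (Matrix.mulVecLin T⁻¹).toContinuousLinearMap.continuous
    exact hopen.measurableSet.preimage hc.measurable
  set c : ℝ := (1 / 2) * (∑ i : Fin 2, ∑ j : Fin 2, (T⁻¹ i j) ^ 2) with hc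
  have hc0 : 0 ≤ c := by positivity
  -- rotation invariance of D by all multiples of the basic angle, in both directions
  have hrotneg : ∀ k : ℕ, (fun x => (rot (-(2 * Real.pi * k / N))).mulVec x) '' D = D := by
    intro k
    have h1 : (fun x => (rot ((k : ℝ) * (2 * Real.pi / N))).mulVec x) '' D = D :=
      rot_image D _ hsym k
    have h2 : (-(2 * Real.pi * k / N)) = -((k : ℝ) * (2 * Real.pi / N)) := by ring
    rw [h2]
    exact rot_image_neg D _ h1
  by_cases hne : (trialSet D n).Nonempty
  · -- main case
    have hkey : ∀ S ∈ trialSet D n, neumannSum TD n ≤ c * S := by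
      rintro S ⟨v, hv, hL2, horth, rfl⟩
      set M : ℕ → Matrix (Fin 2) (Fin 2) ℝ :=
        fun k => rot (2 * Real.pi * k / N) * T⁻¹ with hM
      have hMunit : ∀ k, IsUnit (M k).det := by
        intro k
        rw [hM]
        simp only [Matrix.det_mul, det_rot, one_mul]
        exact T.isUnit_nonsing_inv_det hT
      have hMinv : ∀ k, (M k)⁻¹ = T * rot (-(2 * Real.pi * k / N)) := by
        intro k
        rw [hM]
        simp only
        rw [Matrix.mul_inv_rev, rot_inv, Matrix.nonsing_inv_nonsing_inv T hT]
      have hMinvunit : ∀ k, IsUnit ((M k)⁻¹).det := by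
        intro k
        rw [hMinv k]
        simpa [Matrix.det_mul, det_rot] using hT
      have hMinvdet : ∀ k, |((M k)⁻¹).det| = |T.det| := by
        intro k
        rw [hMinv k]
        simp [Matrix.det_mul, det_rot]
      have himg : ∀ k, (fun x => ((M k)⁻¹).mulVec x) '' D = TD := by
        intro k
        rw [hMinv k, image_mulVec_mul, hrotneg k]
      have hMcomp : ∀ k x, (M k).mulVec (((M k)⁻¹).mulVec x) = x := by
        intro k x
        rw [Matrix.mulVec_mulVec, Matrix.mul_nonsing_inv _ (hMunit k), Matrix.one_mulVec]
      -- denominators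
      have hden : ∀ k j, (∫ x in TD, (v j ((M k).mulVec x)) ^ 2)
          = |T.det| * ∫ x in D, (v j x) ^ 2 := by
        intro k j
        rw [← himg k, cov ((M k)⁻¹) (hMinvunit k) D hmD, hMinvdet k]
        congr 1
        apply integral_congr_ae
        filter_upwards with x
        rw [hMcomp k x]
      -- orthogonality
      have horth' : ∀ k j l, j ≠ l →
          (∫ x in TD, (v j ((M k).mulVec x)) * (v l ((M k).mulVec x))) = 0 := by
        intro k j l hjl
        rw [← himg k, cov ((M k)⁻¹) (hMinvunit k) D hmD]
        have : (∫ x in D, v j ((M k).mulVec (((M k)⁻¹).mulVec x))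
            * v l ((M k).mulVec (((M k)⁻¹).mulVec x))) = ∫ x in D, v j x * v l x := by
          apply integral_congr_ae
          filter_upwards with x
          rw [hMcomp k x]
        rw [this, horth j l hjl, mul_zero]
      -- numerators
      set G : Fin n → Fin 2 → E2 → ℝ :=
        fun j a x => fderiv ℝ (v j) x (Pi.single a 1) with hG
      have hGcont : ∀ j a, Continuous (G j a) := by
        intro j a
        exact (((hv j).continuous_fderiv (by simp)).clm_apply
          continuous_const)
      have hnum : ∀ k j, (∫ x in TD, grad2 (fun y => v j ((M k).mulVec y)) x)
          = |T.det| * ∫ x in D, ∑ i : Fin 2, (∑ a : Fin 2, G j a x * (M k) a i) ^ 2 := by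
        intro k j
        rw [← himg k, cov ((M k)⁻¹) (hMinvunit k) D hmD, hMinvdet k]
        congr 1
        apply integral_congr_ae
        filter_upwards with x
        rw [grad2_comp (M k) (v j) (hv j), hMcomp k x]
      -- integrability of the transformed Dirichlet densities
      have hfint : ∀ k j, IntegrableOn
          (fun x => ∑ i : Fin 2, (∑ a : Fin 2, G j a x * (M k) a i) ^ 2) D := by
        intro k j
        apply integrableOn_of_cont D hbdd
        apply continuous_finset_sum
        intro i _
        exact (continuous_finset_sum _ fun a _ => (hGcont j a).mul continuous_const).pow 2
      -- summing the numerators over the group of rotations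
      have hsumnum : ∀ j, (∑ k ∈ Finset.range N,
            ∫ x in D, ∑ i : Fin 2, (∑ a : Fin 2, G j a x * (M k) a i) ^ 2)
          = ((N : ℝ) / 2) * ((∑ i : Fin 2, ∑ j' : Fin 2, (T⁻¹ i j') ^ 2)
              * ∫ x in D, grad2 (v j) x) := by
        intro j
        rw [← MeasureTheory.integral_finset_sum _ (fun k _ => hfint k j)]
        have hpt : ∀ x : E2, (∑ k ∈ Finset.range N,
              ∑ i : Fin 2, (∑ a : Fin 2, G j a x * (M k) a i) ^ 2)
            = ((N : ℝ) / 2) * ((∑ i : Fin 2, ∑ j' : Fin 2, (T⁻¹ i j') ^ 2)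
                * grad2 (v j) x) := by
          intro x
          rw [hM]
          exact key_sum N hN T⁻¹ (fun a => G j a x)
        rw [integral_congr_ae (Filter.Eventually.of_forall fun x => hpt x)]
        rw [MeasureTheory.integral_const_mul, MeasureTheory.integral_const_mul]
      -- the trial values for the image domain
      set Sk : ℕ → ℝ := fun k => ∑ j,
        (∫ x in TD, grad2 (fun y => v j ((M k).mulVec y)) x)
          / (∫ x in TD, (v j ((M k).mulVec x)) ^ 2) with hSk
      have hmem : ∀ k, Sk k ∈ trialSet TD n := by
        intro k
        refine ⟨fun j y => v j ((M k).mulVec y), ?_, ?_, ?_, rfl⟩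
        · intro j
          exact (hv j).comp ((Matrix.mulVecLin (M k)).toContinuousLinearMap.contDiff)
        · intro j
          rw [hden k j]
          exact mul_ne_zero habs (hL2 j)
        · intro j l hjl
          exact horth' k j l hjl
      have hbddB : BddBelow (trialSet TD n) :=
        ⟨0, fun S hS => trialSet_nonneg TD hmTD n S hS⟩
      have hle : ∀ k, neumannSum TD n ≤ Sk k := by
        intro k
        rw [neumannSum_eq]
        exact csInf_le hbddB (hmem k)
      -- total sum over the rotation group
      have htot : ∑ k ∈ Finset.range N, Sk k
          = (N : ℝ) * (c * ∑ j, (∫ x in D, grad2 (v j) x) / (∫ x in D, (v j x) ^ 2)) := by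
        have h1 : ∀ k ∈ Finset.range N, Sk k = ∑ j,
            (|T.det| * ∫ x in D, ∑ i : Fin 2, (∑ a : Fin 2, G j a x * (M k) a i) ^ 2)
              / (|T.det| * ∫ x in D, (v j x) ^ 2) := by
          intro k _
          rw [hSk]
          apply Finset.sum_congr rfl
          intro j _
          rw [hnum k j, hden k j]
        rw [Finset.sum_congr rfl h1, Finset.sum_comm]
        rw [Finset.mul_sum, Finset.mul_sum]
        apply Finset.sum_congr rfl
        intro j _
        rw [← Finset.sum_div, ← Finset.mul_sum, hsumnum j,
          mul_div_mul_left _ _ habs, hc]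
        ring
      -- pick the best rotation
      have hsum_le : ∑ k ∈ Finset.range N, Sk k ≤ ∑ k ∈ Finset.range N,
          c * ∑ j, (∫ x in D, grad2 (v j) x) / (∫ x in D, (v j x) ^ 2) := by
        rw [htot, Finset.sum_const, Finset.card_range, nsmul_eq_mul]
      obtain ⟨k0, _, hk0⟩ := Finset.exists_le_of_sum_le
        ⟨0, Finset.mem_range.mpr (by omega)⟩ hsum_le
      exact (hle k0).trans hk0
    -- conclude by taking the infimum
    rw [neumannSum_eq D n]
    have himage : neumannSum TD n ≤ sInf (c • (trialSet D n)) := by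
      apply le_csInf (hne.smul_set)
      rintro b ⟨S, hS, rfl⟩
      simpa [smul_eq_mul] using hkey S hS
    calc neumannSum TD n ≤ sInf (c • (trialSet D n)) := himage
      _ = c * sInf (trialSet D n) := by
          rw [Real.sInf_smul_of_nonneg hc0]; simp [smul_eq_mul]
      _ = c * sInf (trialSet D n) := rfl
  · -- degenerate case: no trial families at all
    have hD0 : trialSet D n = ∅ := Set.not_nonempty_iff_eq_empty.mp hne
    have hTD0 : trialSet TD n = ∅ := by
      rw [Set.eq_empty_iff_forall_notMem]
      rintro S ⟨w, hw, hwL2, hworth, _⟩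
      apply hne
      refine ⟨∑ j, (∫ x in D, grad2 (fun x => w j (T.mulVec x)) x)
          / (∫ x in D, (w j (T.mulVec x)) ^ 2),
        fun j x => w j (T.mulVec x), ?_, ?_, ?_, rfl⟩
      · intro j
        exact (hw j).comp ((Matrix.mulVecLin T).toContinuousLinearMap.contDiff)
      · intro j h0
        apply hwL2 j
        rw [← hTDdef] at *
        rw [show (∫ x in TD, (w j x) ^ 2) = |T.det| * ∫ x in D, (w j (T.mulVec x)) ^ 2 from
          cov T hT D hmD (fun x => (w j x) ^ 2), h0, mul_zero]
      · intro j l hjl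
        have h1 : (∫ x in TD, w j x * w l x)
            = |T.det| * ∫ x in D, w j (T.mulVec x) * w l (T.mulVec x) :=
          cov T hT D hmD (fun x => w j x * w l x)
        have h2 := hworth j l hjl
        rw [h1] at h2
        exact (mul_eq_zero.mp h2).resolve_left habs
    rw [neumannSum_eq, neumannSum_eq, hD0, hTD0, Real.sInf_empty]
    simp

end
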